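/- Let $A_1, A_2, A_3$ be three points forming an isosceles triangle in $\mathbb{R}^2$ with $\|A_1 - A_2\| = \|A_1 - A_3\|$, and let weights be $w_1 = 1$, $w_2 = w_3 = w > 1/2$. If an interior point $O$ satisfies the balance condition $u(O,A_1) + w\, u(O,A_2) + w\, u(O,A_3) = 0$, then $O$ lies on the perpendicular bisector of the segment $A_2 A_3$ (equivalently $\|O - A_2\| = \|O - A_3\|$). -/

import Mathlib

/-! Write `a, b, c` for the vectors from `O` to `A₂, A₃, A₁` and `eₓ = ‖x‖⁻¹ • x` (so `e₀ = 0`).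
The balance condition gives `e_c = -w (e_a + e_b)`, and
`⟪e_a + e_b, a - b⟫ = (‖a‖ - ‖b‖)(1 + ⟪e_a, e_b⟫)`. Since `|A₁A₂| = |A₁A₃|` means
`‖a‖² - ‖b‖² = 2⟪c, a - b⟫`, this yields `(‖a‖ - ‖b‖)(‖a‖ + ‖b‖ + 2w‖c‖(1 + ⟪e_a, e_b⟫)) = 0`.
By Cauchy–Schwarz `1 + ⟪e_a, e_b⟫ ≥ 0`, so the second factor vanishes only when `a = b = 0`. -/

open Real EuclideanGeometry

noncomputable def u (X Y : EuclideanSpace ℝ (Fin 2)) : EuclideanSpace ℝ (Fin 2) :=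
  ‖Y - X‖⁻¹ • (Y - X)

section Normalize

variable {E : Type*} [NormedAddCommGroup E] [InnerProductSpace ℝ E]

theorem norm_smul_inv_norm_smul_self (x : E) : ‖x‖ • (‖x‖⁻¹ • x) = x := by
  rcases eq_or_ne x 0 with rfl | hx
  · simp
  · rw [smul_smul, mul_inv_cancel₀ (norm_ne_zero_iff.mpr hx), one_smul]

theorem norm_inv_norm_smul_le_one (x : E) : ‖‖x‖⁻¹ • x‖ ≤ 1 := by
  rcases eq_or_ne x 0 with rfl | hx
  · simp
  · exact (norm_smul_inv_norm hx).le

theorem real_inner_inv_norm_smul_self (x : E) : inner ℝ (‖x‖⁻¹ • x) x = ‖x‖ := by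
  rw [real_inner_smul_left, real_inner_self_eq_norm_sq]
  rcases eq_or_ne ‖x‖ 0 with hx | hx
  · simp [hx]
  · field_simp

theorem neg_one_le_real_inner_inv_norm_smul (a b : E) :
    -1 ≤ inner ℝ (‖a‖⁻¹ • a) (‖b‖⁻¹ • b) := by
  have hcs := neg_le_of_abs_le (abs_real_inner_le_norm (‖a‖⁻¹ • a) (‖b‖⁻¹ • b))
  have hprod : ‖‖a‖⁻¹ • a‖ * ‖‖b‖⁻¹ • b‖ ≤ 1 :=
    mul_le_one₀ (norm_inv_norm_smul_le_one a) (norm_nonneg _) (norm_inv_norm_smul_le_one b)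
  linarith

theorem real_inner_inv_norm_smul_add_sub (a b : E) :
    inner ℝ (‖a‖⁻¹ • a + ‖b‖⁻¹ • b) (a - b) =
      (‖a‖ - ‖b‖) * (1 + inner ℝ (‖a‖⁻¹ • a) (‖b‖⁻¹ • b)) := by
  have hab : inner ℝ (‖a‖⁻¹ • a) b = ‖b‖ * inner ℝ (‖a‖⁻¹ • a) (‖b‖⁻¹ • b) := by
    conv_lhs => rw [← norm_smul_inv_norm_smul_self b]
    rw [real_inner_smul_right]
  have hba : inner ℝ (‖b‖⁻¹ • b) a = ‖a‖ * inner ℝ (‖a‖⁻¹ • a) (‖b‖⁻¹ • b) := by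
    conv_lhs => rw [← norm_smul_inv_norm_smul_self a]
    rw [real_inner_smul_right, real_inner_comm]
  rw [inner_add_left, inner_sub_right, inner_sub_right, real_inner_inv_norm_smul_self,
    real_inner_inv_norm_smul_self, hab, hba]
  ring

theorem norm_eq_norm_of_dist_eq_of_balance {a b c : E} {w : ℝ} (hw : 0 ≤ w)
    (hiso : ‖c - a‖ = ‖c - b‖)
    (hbal : ‖c‖⁻¹ • c + w • (‖a‖⁻¹ • a) + w • (‖b‖⁻¹ • b) = 0) :
    ‖a‖ = ‖b‖ := by
  set s := inner ℝ (‖a‖⁻¹ • a) (‖b‖⁻¹ • b)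
  have hc : ‖c‖⁻¹ • c = -(w • (‖a‖⁻¹ • a + ‖b‖⁻¹ • b)) := by
    rw [smul_add]
    exact eq_neg_of_add_eq_zero_left (by rwa [← add_assoc])
  have hinner : inner ℝ c (a - b) = -(w * ‖c‖ * ((‖a‖ - ‖b‖) * (1 + s))) := by
    conv_lhs => rw [← norm_smul_inv_norm_smul_self c]
    rw [real_inner_smul_left, hc, inner_neg_left, real_inner_smul_left,
      real_inner_inv_norm_smul_add_sub]
    ring
  have hsq : ‖a‖ ^ 2 - ‖b‖ ^ 2 = 2 * inner ℝ c (a - b) := by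
    have h := congrArg (· ^ 2) hiso
    simp only [norm_sub_sq_real] at h
    rw [inner_sub_right]
    linarith
  have hfac : (‖a‖ - ‖b‖) * (‖a‖ + ‖b‖ + 2 * w * ‖c‖ * (1 + s)) = 0 := by
    linear_combination hsq + 2 * hinner
  rcases mul_eq_zero.mp hfac with h | h
  · linarith
  · have hs : 0 ≤ 1 + s := by linarith [neg_one_le_real_inner_inv_norm_smul a b]
    have : 0 ≤ 2 * w * ‖c‖ * (1 + s) := by positivity
    linarith [norm_nonneg a, norm_nonneg b]

end Normalize

theorem fermat_point_on_perp_bisector_general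
    (A₁ A₂ A₃ O : EuclideanSpace ℝ (Fin 2)) (w : ℝ) (hw : 1 / 2 < w)
    (hiso : ‖A₁ - A₂‖ = ‖A₁ - A₃‖)
    (hbal : u O A₁ + w • u O A₂ + w • u O A₃ = 0) :
    ‖O - A₂‖ = ‖O - A₃‖ := by
  rw [← sub_sub_sub_cancel_right A₁ A₂ O, ← sub_sub_sub_cancel_right A₁ A₃ O] at hiso
  rw [norm_sub_rev O A₂, norm_sub_rev O A₃]
  exact norm_eq_norm_of_dist_eq_of_balance (by linarith) hiso hbal

theorem fermat_point_on_perp_bisector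
    (A₁ A₂ A₃ O : EuclideanSpace ℝ (Fin 2)) (w : ℝ) (hw : 1 / 2 < w)
    (hnc : ¬ Collinear ℝ ({A₁, A₂, A₃} : Set (EuclideanSpace ℝ (Fin 2))))
    (hiso : ‖A₁ - A₂‖ = ‖A₁ - A₃‖)
    (hO : O ∉ ({A₁, A₂, A₃} : Set (EuclideanSpace ℝ (Fin 2))))
    (hbal : u O A₁ + w • u O A₂ + w • u O A₃ = 0) :
    ‖O - A₂‖ = ‖O - A₃‖ :=
  fermat_point_on_perp_bisector_general A₁ A₂ A₃ O w hw hiso hbal
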